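/- Compactness of cumulative entailment: a set K of cumulative 𝓛-sequents cumulatively entails α |~ β if and only if some finite subset of K cumulatively entails α |~ β. -/
import Mathlib


namespace DR

/-- Formulas of the lattice-based language 𝓛: variables, ⊥, ⊤, ∧, ∨. -/
inductive Fm : Type where
  | var : ℕ → Fm
  | bot : Fm
  | top : Fm
  | and : Fm → Fm → Fm
  | or  : Fm → Fm → Fm

/-- A polarity (formal context) (A, X, I). -/
structure Polarity : Type 1 where
  Obj : Type
  Feat : Type
  I : Obj → Feat → Prop

namespace Polarity

variable (P : Polarity)

def up (B : Set P.Obj) : Set P.Feat := {x | ∀ b ∈ B, P.I b x}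
def dn (Y : Set P.Feat) : Set P.Obj := {a | ∀ y ∈ Y, P.I a y}

lemma subset_dn_up (B : Set P.Obj) : B ⊆ P.dn (P.up B) :=
  fun _ ha _ hx => hx _ ha

lemma subset_up_dn (Y : Set P.Feat) : Y ⊆ P.up (P.dn Y) :=
  fun _ hx _ ha => ha _ hx

lemma up_anti {B C : Set P.Obj} (h : B ⊆ C) : P.up C ⊆ P.up B :=
  fun _ hx b hb => hx b (h hb)

lemma dn_anti {Y Z : Set P.Feat} (h : Y ⊆ Z) : P.dn Z ⊆ P.dn Y :=
  fun _ ha y hy => ha y (h hy)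

end Polarity

/-- A formal concept of a polarity: a Galois-stable pair (extension, intension). -/
structure Concept (P : Polarity) : Type where
  ext : Set P.Obj
  int : Set P.Feat
  up_ext : P.up ext = int
  dn_int : P.dn int = ext

namespace Concept

variable {P : Polarity}

/-- Lattice meet of concepts: extensions intersect. -/
def meet (c d : Concept P) : Concept P where
  ext := c.ext ∩ d.ext
  int := P.up (c.ext ∩ d.ext)
  up_ext := rfl
  dn_int := by
    apply Set.Subset.antisymm
    · intro a ha
      constructor
      · rw [← c.dn_int]
        intro y hy
        apply ha
        rw [← c.up_ext] at hy
        exact P.up_anti Set.inter_subset_left hy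
      · rw [← d.dn_int]
        intro y hy
        apply ha
        rw [← d.up_ext] at hy
        exact P.up_anti Set.inter_subset_right hy
    · exact P.subset_dn_up _

/-- Lattice join of concepts: intensions intersect. -/
def join (c d : Concept P) : Concept P where
  ext := P.dn (c.int ∩ d.int)
  int := c.int ∩ d.int
  up_ext := by
    apply Set.Subset.antisymm
    · intro x hx
      constructor
      · rw [← c.up_ext]
        intro b hb
        apply hx
        rw [← c.dn_int] at hb
        exact P.dn_anti Set.inter_subset_left hb
      · rw [← d.up_ext]
        intro b hb
        apply hx
        rw [← d.dn_int] at hb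
        exact P.dn_anti Set.inter_subset_right hb
    · exact P.subset_up_dn _
  dn_int := rfl

/-- The greatest concept. -/
def top (P : Polarity) : Concept P where
  ext := Set.univ
  int := P.up Set.univ
  up_ext := rfl
  dn_int := Set.eq_univ_of_univ_subset (P.subset_dn_up _)

/-- The least concept. -/
def bot (P : Polarity) : Concept P where
  ext := P.dn Set.univ
  int := Set.univ
  up_ext := Set.eq_univ_of_univ_subset (P.subset_up_dn _)
  dn_int := rfl

end Concept

/-- A polarity-based model: a polarity with a valuation of variables into concepts. -/
structure Model : Type 1 where
  P : Polarity
  V : ℕ → Concept P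

namespace Model

/-- Homomorphic extension of the valuation to all formulas. -/
def interp (M : Model) : Fm → Concept M.P
  | .var n => M.V n
  | .bot => Concept.bot M.P
  | .top => Concept.top M.P
  | .and φ ψ => Concept.meet (M.interp φ) (M.interp ψ)
  | .or φ ψ => Concept.join (M.interp φ) (M.interp ψ)

/-- M, a ⊩ φ : the object a is in the extension of φ. -/
def objSat (M : Model) (a : M.P.Obj) (φ : Fm) : Prop := a ∈ (M.interp φ).ext

/-- M, x ≻ φ : the feature x is in the intension of φ. -/
def featSat (M : Model) (x : M.P.Feat) (φ : Fm) : Prop := x ∈ (M.interp φ).int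

end Model

/-- Validity of the sequent φ ⊢ ψ: in every polarity-based model the
extension of φ is contained in the extension of ψ. -/
def SeqValid (φ ψ : Fm) : Prop :=
  ∀ M : Model, (M.interp φ).ext ⊆ (M.interp ψ).ext

/-- A conceptual cumulative consequence relation: reflexive and closed
under (LLE), (RW), (CM) and (Cut). -/
structure IsCumulative (R : Fm → Fm → Prop) : Prop where
  refl : ∀ φ, R φ φ
  lle : ∀ φ ψ χ, SeqValid φ ψ → SeqValid ψ φ → R φ χ → R ψ χ
  rw : ∀ φ ψ χ, SeqValid φ ψ → R χ φ → R χ ψ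
  cm : ∀ φ ψ χ, R φ ψ → R φ χ → R (Fm.and φ ψ) χ
  cut : ∀ φ ψ χ, R (Fm.and φ ψ) χ → R φ ψ → R φ χ

/-- Closure under the rule (Loop). -/
def LoopClosed (R : Fm → Fm → Prop) : Prop :=
  ∀ (n : ℕ) (φ : ℕ → Fm),
    (∀ i < n, R (φ i) (φ (i + 1))) → R (φ n) (φ 0) → R (φ 0) (φ n)

/-- A pointed polarity-based model. -/
structure PointedModel : Type 1 where
  M : Model
  pt : M.P.Obj

/-- Satisfaction at a pointed model. -/
def PointedModel.sat (Ma : PointedModel) (φ : Fm) : Prop := Ma.M.objSat Ma.pt φ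

/-- A pointed model is normal for φ iff it satisfies every plausible consequence of φ. -/
def NormalFor (R : Fm → Fm → Prop) (Ma : PointedModel) (φ : Fm) : Prop :=
  ∀ ψ, R φ ψ → Ma.sat ψ

/-- A pointed model is supernormal for φ. -/
def SupernormalFor (R : Fm → Fm → Prop) (Ma : PointedModel) (φ : Fm) : Prop :=
  ∀ ψ, R φ ψ ↔ Ma.sat ψ

/-- A frame (S, l, ≺): states labelled by sets of pointed polarity-based
models with a preference relation. -/
structure Frame : Type 2 where
  S : Type
  l : S → Set PointedModel
  prec : S → S → Prop

/-- t is minimal in P (w.r.t. prec). -/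
def MinimalIn {α : Type _} (prec : α → α → Prop) (P : Set α) (t : α) : Prop :=
  t ∈ P ∧ ∀ s ∈ P, ¬ prec s t

/-- t is a minimum of P (w.r.t. prec). -/
def IsMinimum {α : Type _} (prec : α → α → Prop) (P : Set α) (t : α) : Prop :=
  t ∈ P ∧ ∀ s ∈ P, s ≠ t → prec t s

/-- P is smooth (w.r.t. prec). -/
def Smooth {α : Type _} (prec : α → α → Prop) (P : Set α) : Prop :=
  ∀ t ∈ P, MinimalIn prec P t ∨ ∃ s, MinimalIn prec P s ∧ prec s t

namespace Frame

/-- s ⊨ φ : every pointed model in l(s) satisfies φ. -/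
def stateSat (F : Frame) (s : F.S) (φ : Fm) : Prop :=
  ∀ Ma ∈ F.l s, Ma.sat φ

/-- φ̂ : the set of states satisfying φ. -/
def hat (F : Frame) (φ : Fm) : Set F.S := {s | F.stateSat s φ}

/-- A conceptual cumulative model: φ̂ is smooth for every φ. -/
def IsCumulativeModel (F : Frame) : Prop :=
  ∀ φ : Fm, Smooth F.prec (F.hat φ)

/-- The consequence relation |~_𝓜 defined by a frame: every state minimal
in φ̂ belongs to ψ̂. -/
def conseq (F : Frame) (φ ψ : Fm) : Prop :=
  ∀ s, MinimalIn F.prec (F.hat φ) s → s ∈ F.hat ψ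

/-- Replace the preference relation of a frame. -/
def withPrec (F : Frame) (p : F.S → F.S → Prop) : Frame := ⟨F.S, F.l, p⟩

end Frame

/-- The equivalence class φ/∼ of φ under ∼ (φ ∼ ψ iff φ |~ ψ and ψ |~ φ). -/
def cls (R : Fm → Fm → Prop) (φ : Fm) : Set Fm := {ψ | R φ ψ ∧ R ψ φ}

/-- φ/∼ ≤ ψ/∼ : there is χ ∈ φ/∼ with ψ |~ χ (ψ any representative of ψ/∼). -/
def clsLE (R : Fm → Fm → Prop) (C D : Set Fm) : Prop :=
  ∃ χ ∈ C, ∃ ψ ∈ D, R ψ χ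

/-- The canonical model of a consequence relation: states are the
equivalence classes φ/∼, labelled by the normal pointed models for φ,
with φ/∼ ≺ ψ/∼ iff φ/∼ ≤ ψ/∼ and φ/∼ ≠ ψ/∼. -/
def canonicalFrame (R : Fm → Fm → Prop) : Frame where
  S := {C : Set Fm // ∃ φ, C = cls R φ}
  l := fun s => {Ma | ∃ φ, s.val = cls R φ ∧ NormalFor R Ma φ}
  prec := fun s t => clsLE R s.val t.val ∧ s ≠ t

/-- The state φ/∼ of the canonical model. -/
def canonicalState (R : Fm → Fm → Prop) (φ : Fm) : (canonicalFrame R).S :=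
  ⟨cls R φ, φ, rfl⟩


/-- K cumulatively entails α |~ β. -/
def CumEntails (K : Set (Fm × Fm)) (α β : Fm) : Prop :=
  ∀ F : Frame, F.IsCumulativeModel →
    (∀ p ∈ K, F.conseq p.1 p.2) → F.conseq α β

/-! ### Auxiliary development for compactness -/

/-- Derivability from a set of sequents by the rules of system C. -/
inductive Der (K : Set (Fm × Fm)) : Fm → Fm → Prop
  | base {φ ψ : Fm} : (φ, ψ) ∈ K → Der K φ ψ
  | refl (φ : Fm) : Der K φ φ
  | lle {φ ψ χ : Fm} : SeqValid φ ψ → SeqValid ψ φ → Der K φ χ → Der K ψ χ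
  | rw {φ ψ χ : Fm} : SeqValid φ ψ → Der K χ φ → Der K χ ψ
  | cm {φ ψ χ : Fm} : Der K φ ψ → Der K φ χ → Der K (Fm.and φ ψ) χ
  | cut {φ ψ χ : Fm} : Der K (Fm.and φ ψ) χ → Der K φ ψ → Der K φ χ

lemma seqValid_refl (φ : Fm) : SeqValid φ φ := fun _ => subset_rfl

lemma seqValid_trans {φ ψ χ : Fm} (h1 : SeqValid φ ψ) (h2 : SeqValid ψ χ) : SeqValid φ χ :=
  fun M => (h1 M).trans (h2 M)

lemma seqValid_top (φ : Fm) : SeqValid φ Fm.top := fun M a _ => Set.mem_univ a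

lemma seqValid_bot (φ : Fm) : SeqValid Fm.bot φ := fun M a ha => by
  rw [← (M.interp φ).dn_int]
  exact fun y _ => ha y (Set.mem_univ y)

lemma seqValid_and_left (φ ψ : Fm) : SeqValid (Fm.and φ ψ) φ := fun _ => Set.inter_subset_left

lemma seqValid_and_right (φ ψ : Fm) : SeqValid (Fm.and φ ψ) ψ := fun _ => Set.inter_subset_right

lemma seqValid_and_intro {φ ψ χ : Fm} (h1 : SeqValid χ φ) (h2 : SeqValid χ ψ) :
    SeqValid χ (Fm.and φ ψ) := fun M a ha => ⟨h1 M ha, h2 M ha⟩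

lemma seqValid_or_inl (φ ψ : Fm) : SeqValid φ (Fm.or φ ψ) := fun M a ha y hy => by
  have : y ∈ M.P.up (M.interp φ).ext := by rw [(M.interp φ).up_ext]; exact hy.1
  exact this a ha

lemma seqValid_or_inr (φ ψ : Fm) : SeqValid ψ (Fm.or φ ψ) := fun M a ha y hy => by
  have : y ∈ M.P.up (M.interp ψ).ext := by rw [(M.interp ψ).up_ext]; exact hy.2
  exact this a ha

lemma seqValid_or_elim {φ ψ χ : Fm} (h1 : SeqValid φ χ) (h2 : SeqValid ψ χ) :
    SeqValid (Fm.or φ ψ) χ := fun M a ha => by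
  rw [← (M.interp χ).dn_int]
  intro y hy
  have hy' : y ∈ M.P.up (M.interp χ).ext := by rw [(M.interp χ).up_ext]; exact hy
  exact ha y ⟨by rw [← (M.interp φ).up_ext]; exact M.P.up_anti (h1 M) hy',
              by rw [← (M.interp ψ).up_ext]; exact M.P.up_anti (h2 M) hy'⟩

namespace Der

variable {K : Set (Fm × Fm)}

lemma ofValid {φ ψ : Fm} (h : SeqValid φ ψ) : Der K φ ψ := Der.rw h (Der.refl φ)

lemma andI {a b c : Fm} (hb : Der K a b) (hc : Der K a c) : Der K a (Fm.and b c) := by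
  have h1 : Der K (Fm.and a b) c := Der.cm hb hc
  have h2 : Der K (Fm.and (Fm.and a b) c) (Fm.and b c) :=
    ofValid (seqValid_and_intro
      (seqValid_trans (seqValid_and_left _ _) (seqValid_and_right _ _))
      (seqValid_and_right _ _))
  exact Der.cut (Der.cut h2 h1) hb

lemma leftEquiv {φ ψ χ : Fm} (h1 : Der K φ ψ) (h2 : Der K ψ φ) (h : Der K φ χ) :
    Der K ψ χ := by
  have h3 : Der K (Fm.and φ ψ) χ := Der.cm h1 h
  have h4 : Der K (Fm.and ψ φ) χ :=
    Der.lle (seqValid_and_intro (seqValid_and_right _ _) (seqValid_and_left _ _))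
      (seqValid_and_intro (seqValid_and_right _ _) (seqValid_and_left _ _)) h3
  exact Der.cut h4 h2

/-- Key lemma for minimality in the canonical frame. -/
lemma keyLoop {α χ δ : Fm} (hδα : Der K δ α) (hαχ : Der K α χ) (hχδ : Der K χ δ)
    (hδχ : Der K δ χ) : Der K α δ := by
  have hχα : Der K χ α := leftEquiv hδχ hχδ hδα
  have h1 : Der K χ (Fm.and α χ) := andI hχα (Der.refl χ)
  have h2 : Der K (Fm.and α χ) χ := ofValid (seqValid_and_right _ _)
  have h3 : Der K (Fm.and α χ) δ := leftEquiv h1 h2 hχδ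
  exact Der.cut h3 hαχ

lemma mono {K' : Set (Fm × Fm)} (hsub : K ⊆ K') {φ ψ : Fm} (h : Der K φ ψ) :
    Der K' φ ψ := by
  induction h with
  | base hp => exact Der.base (hsub hp)
  | refl φ => exact Der.refl φ
  | lle h1 h2 _ ih => exact Der.lle h1 h2 ih
  | rw h _ ih => exact Der.rw h ih
  | cm _ _ ih1 ih2 => exact Der.cm ih1 ih2
  | cut _ _ ih1 ih2 => exact Der.cut ih1 ih2

lemma finitary {φ ψ : Fm} (h : Der K φ ψ) :
    ∃ K' : Set (Fm × Fm), K'.Finite ∧ K' ⊆ K ∧ Der K' φ ψ := by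
  induction h with
  | base hp =>
      exact ⟨{_}, Set.finite_singleton _, Set.singleton_subset_iff.2 hp,
        Der.base (Set.mem_singleton _)⟩
  | refl φ => exact ⟨∅, Set.finite_empty, Set.empty_subset _, Der.refl φ⟩
  | lle h1 h2 _ ih =>
      obtain ⟨K', hf, hs, hd⟩ := ih
      exact ⟨K', hf, hs, Der.lle h1 h2 hd⟩
  | rw h _ ih =>
      obtain ⟨K', hf, hs, hd⟩ := ih
      exact ⟨K', hf, hs, Der.rw h hd⟩
  | cm _ _ ih1 ih2 =>
      obtain ⟨K1, hf1, hs1, hd1⟩ := ih1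
      obtain ⟨K2, hf2, hs2, hd2⟩ := ih2
      exact ⟨K1 ∪ K2, hf1.union hf2, Set.union_subset hs1 hs2,
        Der.cm (Der.mono Set.subset_union_left hd1) (Der.mono Set.subset_union_right hd2)⟩
  | cut _ _ ih1 ih2 =>
      obtain ⟨K1, hf1, hs1, hd1⟩ := ih1
      obtain ⟨K2, hf2, hs2, hd2⟩ := ih2
      exact ⟨K1 ∪ K2, hf1.union hf2, Set.union_subset hs1 hs2,
        Der.cut (Der.mono Set.subset_union_left hd1) (Der.mono Set.subset_union_right hd2)⟩

end Der

/-! #### Supernormal pointed models from filters -/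

/-- A polarity whose objects are formulas plus one extra point for a filter `T`. -/
def filterPolarity (T : Set Fm) : Polarity where
  Obj := Option Fm
  Feat := Fm
  I o x := o.elim (x ∈ T) (fun a => SeqValid a x)

/-- The canonical extension of `ψ` in the filter polarity. -/
def Dext (T : Set Fm) (ψ : Fm) : Set (filterPolarity T).Obj :=
  fun o => o.elim (ψ ∈ T) (fun a => SeqValid a ψ)

/-- The canonical intension of `ψ`. -/
def Uint (T : Set Fm) (ψ : Fm) : Set (filterPolarity T).Feat := {x | SeqValid ψ x}

section Filter

variable {T : Set Fm}

lemma up_Dext (hUp : ∀ a b : Fm, a ∈ T → SeqValid a b → b ∈ T) (ψ : Fm) : (filterPolarity T).up (Dext T ψ) = Uint T ψ := by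
  ext x
  constructor
  · intro hx
    exact hx (some ψ) (seqValid_refl ψ)
  · intro hx o ho
    cases o with
    | some a => exact seqValid_trans ho hx
    | none => exact hUp _ _ ho hx

lemma dn_Uint (hUp : ∀ a b : Fm, a ∈ T → SeqValid a b → b ∈ T) (ψ : Fm) : (filterPolarity T).dn (Uint T ψ) = Dext T ψ := by
  ext o
  constructor
  · intro ho
    cases o with
    | some a => exact ho ψ (seqValid_refl ψ)
    | none => exact ho ψ (seqValid_refl ψ)
  · intro ho x hx
    cases o with
    | some a => exact seqValid_trans ho hx
    | none => exact hUp _ _ ho hx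

/-- The concept with extension `Dext T ψ`. -/
def filterConcept (hUp : ∀ a b : Fm, a ∈ T → SeqValid a b → b ∈ T) (ψ : Fm) : Concept (filterPolarity T) where
  ext := Dext T ψ
  int := Uint T ψ
  up_ext := up_Dext hUp ψ
  dn_int := dn_Uint hUp ψ

/-- The model over the filter polarity. -/
def filterModel (hUp : ∀ a b : Fm, a ∈ T → SeqValid a b → b ∈ T) : Model := ⟨filterPolarity T, fun n => filterConcept hUp (Fm.var n)⟩

lemma Concept.ext_inj {P : Polarity} {c d : Concept P} (h : c.ext = d.ext) : c = d := by
  have hint : c.int = d.int := by rw [← c.up_ext, ← d.up_ext, h]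
  cases c; cases d
  simp only at h hint
  subst h; subst hint
  rfl

lemma filter_interp (hUp : ∀ a b : Fm, a ∈ T → SeqValid a b → b ∈ T)
    (hTop : Fm.top ∈ T)
    (hAnd : ∀ a b : Fm, a ∈ T → b ∈ T → Fm.and a b ∈ T) (ψ : Fm) :
    (filterModel hUp).interp ψ = filterConcept hUp ψ := by
  induction ψ with
  | var n => rfl
  | bot =>
      apply Concept.ext_inj
      show (filterPolarity T).dn Set.univ = Dext T Fm.bot
      ext o
      constructor
      · intro ho
        cases o with
        | some a => exact ho Fm.bot (Set.mem_univ _)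
        | none => exact ho Fm.bot (Set.mem_univ _)
      · intro ho y _
        cases o with
        | some a => exact seqValid_trans ho (seqValid_bot y)
        | none => exact hUp _ _ ho (seqValid_bot y)
  | top =>
      apply Concept.ext_inj
      show Set.univ = Dext T Fm.top
      ext o
      constructor
      · intro _
        cases o with
        | some a => exact seqValid_top a
        | none => exact hTop
      · intro _; exact Set.mem_univ _
  | and φ ψ ihφ ihψ =>
      apply Concept.ext_inj
      show ((filterModel hUp).interp φ).ext ∩ ((filterModel hUp).interp ψ).ext = Dext T (Fm.and φ ψ)
      rw [ihφ, ihψ]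
      ext o
      constructor
      · intro ho
        cases o with
        | some a => exact seqValid_and_intro ho.1 ho.2
        | none => exact hAnd _ _ ho.1 ho.2
      · intro ho
        cases o with
        | some a =>
            exact ⟨seqValid_trans ho (seqValid_and_left φ ψ),
                   seqValid_trans ho (seqValid_and_right φ ψ)⟩
        | none =>
            exact ⟨hUp _ _ ho (seqValid_and_left φ ψ), hUp _ _ ho (seqValid_and_right φ ψ)⟩
  | or φ ψ ihφ ihψ =>
      apply Concept.ext_inj
      show (filterPolarity T).dn
          (((filterModel hUp).interp φ).int ∩ ((filterModel hUp).interp ψ).int)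
        = Dext T (Fm.or φ ψ)
      rw [ihφ, ihψ]
      have hint : Uint T φ ∩ Uint T ψ = Uint T (Fm.or φ ψ) := by
        ext x
        exact ⟨fun h => seqValid_or_elim h.1 h.2,
               fun h => ⟨seqValid_trans (seqValid_or_inl φ ψ) h,
                         seqValid_trans (seqValid_or_inr φ ψ) h⟩⟩
      show (filterPolarity T).dn (Uint T φ ∩ Uint T ψ) = Dext T (Fm.or φ ψ)
      rw [hint]
      exact dn_Uint hUp _

end Filter

/-- Existence of supernormal pointed models for `Der K`. -/
lemma exists_supernormal (K : Set (Fm × Fm)) (φ0 : Fm) :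
    ∃ Ma : PointedModel, SupernormalFor (Der K) Ma φ0 := by
  have hUp : ∀ a b : Fm, a ∈ {ψ | Der K φ0 ψ} → SeqValid a b → b ∈ {ψ | Der K φ0 ψ} :=
    fun a b ha h => Der.rw h ha
  have hTop : Fm.top ∈ {ψ | Der K φ0 ψ} := Der.ofValid (seqValid_top φ0)
  have hAnd : ∀ a b : Fm, a ∈ {ψ | Der K φ0 ψ} → b ∈ {ψ | Der K φ0 ψ} →
      Fm.and a b ∈ {ψ | Der K φ0 ψ} := fun a b ha hb => Der.andI ha hb
  refine ⟨⟨filterModel hUp, none⟩, fun ψ => ?_⟩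
  show Der K φ0 ψ ↔ none ∈ ((filterModel hUp).interp ψ).ext
  rw [filter_interp hUp hTop hAnd ψ]
  exact Iff.rfl

/-! #### Canonical frame lemmas -/

lemma mem_cls_self {R : Fm → Fm → Prop} (hrefl : ∀ φ, R φ φ) (φ : Fm) : φ ∈ cls R φ :=
  ⟨hrefl φ, hrefl φ⟩

lemma cls_eq_of_equiv {K : Set (Fm × Fm)} {δ α : Fm} (h1 : Der K δ α) (h2 : Der K α δ) :
    cls (Der K) δ = cls (Der K) α := by
  ext ψ
  constructor
  · rintro ⟨hδψ, hψδ⟩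
    exact ⟨Der.leftEquiv h1 h2 hδψ, Der.leftEquiv hδψ hψδ h1⟩
  · rintro ⟨hαψ, hψα⟩
    exact ⟨Der.leftEquiv h2 h1 hαψ, Der.leftEquiv hαψ hψα h2⟩

lemma mem_hat_iff (K : Set (Fm × Fm)) (δ ψ : Fm) (s : (canonicalFrame (Der K)).S)
    (hs : s.val = cls (Der K) δ) :
    s ∈ (canonicalFrame (Der K)).hat ψ ↔ Der K δ ψ := by
  constructor
  · intro h
    obtain ⟨Ma, hsup⟩ := exists_supernormal K δ
    have hMa : Ma ∈ (canonicalFrame (Der K)).l s := ⟨δ, hs, fun χ hχ => (hsup χ).1 hχ⟩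
    exact (hsup ψ).2 (h Ma hMa)
  · rintro h Ma ⟨φ', hval, hnorm⟩
    have hcls : cls (Der K) δ = cls (Der K) φ' := hs ▸ hval
    have h1 : φ' ∈ cls (Der K) δ := hcls ▸ mem_cls_self Der.refl φ'
    exact hnorm ψ (Der.leftEquiv h1.1 h1.2 h)

lemma canonical_min (K : Set (Fm × Fm)) (α : Fm) :
    MinimalIn (canonicalFrame (Der K)).prec ((canonicalFrame (Der K)).hat α)
      (canonicalState (Der K) α) := by
  constructor
  · exact (mem_hat_iff K α α _ rfl).2 (Der.refl α)
  · intro t ht hprec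
    obtain ⟨δ, hC⟩ := t.2
    have hδα : Der K δ α := (mem_hat_iff K δ α t hC).1 ht
    obtain ⟨⟨χ, hχt, ψ', hψ's, hψ'χ⟩, hne⟩ := hprec
    rw [hC] at hχt
    have hδχ : Der K δ χ := hχt.1
    have hχδ : Der K χ δ := hχt.2
    have hαψ' : Der K α ψ' := hψ's.1
    have hψ'α : Der K ψ' α := hψ's.2
    have hαχ : Der K α χ := Der.leftEquiv hψ'α hαψ' hψ'χ
    have hαδ : Der K α δ := Der.keyLoop hδα hαχ hχδ hδχ
    exact hne (Subtype.ext (hC.trans (cls_eq_of_equiv hδα hαδ)))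

lemma canonical_cum (K : Set (Fm × Fm)) : (canonicalFrame (Der K)).IsCumulativeModel := by
  intro ψ t ht
  obtain ⟨δ, hC⟩ := t.2
  have hδψ : Der K δ ψ := (mem_hat_iff K δ ψ t hC).1 ht
  by_cases he : t = canonicalState (Der K) ψ
  · left
    rw [he]
    exact canonical_min K ψ
  · right
    refine ⟨canonicalState (Der K) ψ, canonical_min K ψ,
      ⟨⟨ψ, mem_cls_self Der.refl ψ, δ, ?_, hδψ⟩, fun h => he h.symm⟩⟩
    rw [hC]
    exact mem_cls_self Der.refl δ

lemma conseq_of_der {K : Set (Fm × Fm)} {φ ψ : Fm} (h : Der K φ ψ) :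
    (canonicalFrame (Der K)).conseq φ ψ := by
  intro s hmin
  obtain ⟨δ, hC⟩ := s.2
  have hδφ : Der K δ φ := (mem_hat_iff K δ φ s hC).1 hmin.1
  by_cases he : s = canonicalState (Der K) φ
  · have hcls : cls (Der K) δ = cls (Der K) φ := by rw [← hC, he]; rfl
    have h1 : φ ∈ cls (Der K) δ := hcls ▸ mem_cls_self Der.refl φ
    exact (mem_hat_iff K δ ψ s hC).2 (Der.leftEquiv h1.2 h1.1 h)
  · exfalso
    refine hmin.2 (canonicalState (Der K) φ) ((mem_hat_iff K φ φ _ rfl).2 (Der.refl φ))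
      ⟨⟨φ, mem_cls_self Der.refl φ, δ, ?_, hδφ⟩, fun hh => he hh.symm⟩
    rw [hC]
    exact mem_cls_self Der.refl δ

lemma der_of_conseq {K : Set (Fm × Fm)} {φ ψ : Fm}
    (h : (canonicalFrame (Der K)).conseq φ ψ) : Der K φ ψ :=
  (mem_hat_iff K φ ψ _ rfl).1 (h _ (canonical_min K φ))

/-! #### Soundness -/

lemma hat_mono (F : Frame) {φ ψ : Fm} (h : SeqValid φ ψ) : F.hat φ ⊆ F.hat ψ :=
  fun _ hs Ma hMa => h Ma.M (hs Ma hMa)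

lemma hat_and (F : Frame) (φ ψ : Fm) : F.hat (Fm.and φ ψ) = F.hat φ ∩ F.hat ψ := by
  ext s
  constructor
  · intro hs
    exact ⟨fun Ma hMa => (hs Ma hMa).1, fun Ma hMa => (hs Ma hMa).2⟩
  · rintro ⟨h1, h2⟩ Ma hMa
    exact ⟨h1 Ma hMa, h2 Ma hMa⟩

lemma Der.sound {K : Set (Fm × Fm)} {φ ψ : Fm} (h : Der K φ ψ) (F : Frame)
    (hcum : F.IsCumulativeModel) (hK : ∀ p ∈ K, F.conseq p.1 p.2) : F.conseq φ ψ := by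
  induction h with
  | base hp => exact hK _ hp
  | refl φ => exact fun s hs => hs.1
  | lle h1 h2 _ ih =>
      intro s hs
      have heq : F.hat _ = F.hat _ := subset_antisymm (hat_mono F h1) (hat_mono F h2)
      exact ih s (by rw [heq]; exact hs)
  | rw h _ ih => exact fun s hs => hat_mono F h (ih s hs)
  | cm _ _ ih1 ih2 =>
      intro s hs
      have hsφ : s ∈ F.hat _ := ((hat_and F _ _) ▸ hs.1).1
      rcases hcum _ s hsφ with hmin | ⟨t, htmin, hts⟩
      · exact ih2 s hmin
      · exfalso
        have htψ := ih1 t htmin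
        refine hs.2 t ?_ hts
        rw [hat_and]
        exact ⟨htmin.1, htψ⟩
  | cut _ _ ih1 ih2 =>
      intro s hs
      have hsψ := ih2 s hs
      refine ih1 s ⟨by rw [hat_and]; exact ⟨hs.1, hsψ⟩, fun t ht hpt => ?_⟩
      have : t ∈ F.hat _ := ((hat_and F _ _) ▸ ht).1
      exact hs.2 t this hpt

/-- compactness of cumulative entailment. -/
theorem cumulative_entailment_compact (K : Set (Fm × Fm)) (α β : Fm) :
    CumEntails K α β ↔
    ∃ K' : Set (Fm × Fm), K'.Finite ∧ K' ⊆ K ∧ CumEntails K' α β := by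
  constructor
  · intro h
    have hDer : Der K α β :=
      der_of_conseq (h (canonicalFrame (Der K)) (canonical_cum K)
        (fun p hp => conseq_of_der (Der.base hp)))
    obtain ⟨K', hfin, hsub, hd⟩ := hDer.finitary
    exact ⟨K', hfin, hsub, fun F hcum hK => hd.sound F hcum hK⟩
  · rintro ⟨K', _, hsub, h⟩ F hcum hK
    exact h F hcum (fun p hp => hK p (hsub hp))

end DR
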